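/- Let 0 < μ₂ < μ₁ < 1. Then there exists a unique m* ∈ (μ₂, μ₁) such that d(m*, μ₁) = d(m*, μ₂), and the infimum over z ∈ (0,1) of max( d(z, μ₁), d(z, μ₂) ) equals d(m*, μ₁). -/

import Mathlib

/-!
Write `kl x y - kl x w` as an affine function of `x`. For `w = m` this gives the three-point
identity `kl z y = kl z m + kl m y + (z - m) * s` with a slope `s` whose sign is that of
`m - y`; since `kl z m ≥ 0`, the map `z ↦ kl z y` decreases up to `y` and increases after it.
For `w = μ₂, y = μ₁` the difference `kl x μ₁ - kl x μ₂` is a strictly decreasing affine function,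
positive at `μ₂` and negative at `μ₁`, so it has exactly one zero `m*` between them. Any `z ≤ m*`
then has `kl z μ₁ ≥ kl m* μ₁`, and any `z ≥ m*` has `kl z μ₂ ≥ kl m* μ₂ = kl m* μ₁`.
-/

/-- The Kullback-Leibler divergence between Bernoulli distributions of
parameters `x` and `y`. -/
noncomputable def klBernoulli (x y : ℝ) : ℝ :=
  x * Real.log (x / y) + (1 - x) * Real.log ((1 - x) / (1 - y))

open Real Set InformationTheory

lemma klBernoulli_eq_klFun {y : ℝ} (x : ℝ) (hy : y ≠ 0) (hy' : 1 - y ≠ 0) :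
    klBernoulli x y = y * klFun (x / y) + (1 - y) * klFun ((1 - x) / (1 - y)) := by
  simp only [klBernoulli, klFun_apply]
  field_simp
  ring

lemma klBernoulli_nonneg {x y : ℝ} (hx₀ : 0 ≤ x) (hx₁ : x ≤ 1) (hy₀ : 0 < y) (hy₁ : y < 1) :
    0 ≤ klBernoulli x y := by
  rw [klBernoulli_eq_klFun x hy₀.ne' (by linarith)]
  have := klFun_nonneg (div_nonneg hx₀ hy₀.le)
  have := klFun_nonneg (div_nonneg (sub_nonneg.2 hx₁) (sub_pos.2 hy₁).le)
  have := sub_pos.2 hy₁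
  positivity

lemma klBernoulli_pos {x y : ℝ} (hx₀ : 0 ≤ x) (hx₁ : x ≤ 1) (hy₀ : 0 < y) (hy₁ : y < 1)
    (hxy : x ≠ y) : 0 < klBernoulli x y := by
  rw [klBernoulli_eq_klFun x hy₀.ne' (by linarith)]
  have hxy' : klFun (x / y) ≠ 0 := by
    rw [ne_eq, klFun_eq_zero_iff (div_nonneg hx₀ hy₀.le), div_eq_one_iff_eq hy₀.ne']
    exact hxy
  have := (klFun_nonneg (div_nonneg hx₀ hy₀.le)).lt_of_ne' hxy'
  have := klFun_nonneg (div_nonneg (sub_nonneg.2 hx₁) (sub_pos.2 hy₁).le)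
  have := sub_pos.2 hy₁
  positivity

lemma klBernoulli_self (x : ℝ) : klBernoulli x x = 0 := by
  rcases eq_or_ne x 0 with rfl | hx
  · simp [klBernoulli]
  rcases eq_or_ne (1 - x) 0 with hx' | hx'
  · simp [klBernoulli, hx']
  simp [klBernoulli, div_self hx, div_self hx']

lemma mul_log_div_sub_mul_log_div (x : ℝ) {y w : ℝ} (hy : y ≠ 0) (hw : w ≠ 0) :
    x * log (x / y) - x * log (x / w) = x * log (w / y) := by
  rcases eq_or_ne x 0 with rfl | hx
  · simp
  rw [log_div hx hy, log_div hx hw, log_div hw hy]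
  ring

lemma klBernoulli_sub_klBernoulli (x : ℝ) {y w : ℝ} (hy : y ≠ 0) (hy' : 1 - y ≠ 0)
    (hw : w ≠ 0) (hw' : 1 - w ≠ 0) :
    klBernoulli x y - klBernoulli x w = x * log (w / y) + (1 - x) * log ((1 - w) / (1 - y)) := by
  rw [← mul_log_div_sub_mul_log_div x hy hw, ← mul_log_div_sub_mul_log_div (1 - x) hy' hw',
    klBernoulli, klBernoulli]
  ring

lemma klBernoulli_eq_add_add (x : ℝ) {y w : ℝ} (hy : y ≠ 0) (hy' : 1 - y ≠ 0)
    (hw : w ≠ 0) (hw' : 1 - w ≠ 0) :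
    klBernoulli x y = klBernoulli x w + klBernoulli w y
      + (x - w) * (log (w / y) - log ((1 - w) / (1 - y))) := by
  have hxw := klBernoulli_sub_klBernoulli x hy hy' hw hw'
  have hww := klBernoulli_sub_klBernoulli w hy hy' hw hw'
  rw [klBernoulli_self, sub_zero] at hww
  linear_combination hxw - hww

lemma antitoneOn_klBernoulli_left {y : ℝ} (hy : y < 1) :
    AntitoneOn (fun x ↦ klBernoulli x y) (Ioc 0 y) := by
  intro z ⟨hz₀, hzy⟩ m ⟨hm₀, hmy⟩ hzm
  have hy₀ : 0 < y := hm₀.trans_le hmy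
  have hslope : log (m / y) - log ((1 - m) / (1 - y)) ≤ 0 := by
    have := log_nonpos (div_pos hm₀ hy₀).le ((div_le_one hy₀).2 hmy)
    have := log_nonneg ((one_le_div (by linarith)).2 (by linarith : 1 - y ≤ 1 - m))
    linarith
  have := klBernoulli_nonneg hz₀.le (by linarith) hm₀ (by linarith)
  show klBernoulli m y ≤ klBernoulli z y
  rw [klBernoulli_eq_add_add z hy₀.ne' (by linarith) hm₀.ne' (by linarith)]
  nlinarith

lemma monotoneOn_klBernoulli_left {y : ℝ} (hy : 0 < y) :
    MonotoneOn (fun x ↦ klBernoulli x y) (Ico y 1) := by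
  intro m ⟨hym, hm₁⟩ z ⟨_, hz₁⟩ hmz
  have hm₀ : 0 < m := hy.trans_le hym
  have hslope : 0 ≤ log (m / y) - log ((1 - m) / (1 - y)) := by
    have := log_nonneg ((one_le_div hy).2 hym)
    have := log_nonpos (div_pos (by linarith) (by linarith)).le
      ((div_le_one (by linarith)).2 (by linarith : 1 - m ≤ 1 - y))
    linarith
  have := klBernoulli_nonneg (by linarith) hz₁.le hm₀ hm₁
  show klBernoulli m y ≤ klBernoulli z y
  rw [klBernoulli_eq_add_add z hy.ne' (by linarith) hm₀.ne' (by linarith)]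
  nlinarith

theorem existsUnique_klBernoulli_eq {μ₁ μ₂ : ℝ} (h₂ : 0 < μ₂) (h₁₂ : μ₂ < μ₁) (h₁ : μ₁ < 1) :
    ∃! m, m ∈ Ioo μ₂ μ₁ ∧ klBernoulli m μ₁ = klBernoulli m μ₂ := by
  set g : ℝ → ℝ := fun x ↦ klBernoulli x μ₁ - klBernoulli x μ₂
  have hg : g = fun x ↦ x * log (μ₂ / μ₁) + (1 - x) * log ((1 - μ₂) / (1 - μ₁)) :=
    funext fun x ↦ klBernoulli_sub_klBernoulli x (by linarith) (by linarith) h₂.ne' (by linarith)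
  have hg_anti : StrictAnti g := by
    have := log_neg (div_pos h₂ (by linarith)) ((div_lt_one (by linarith)).2 h₁₂)
    have := log_pos ((one_lt_div (by linarith)).2 (by linarith : 1 - μ₁ < 1 - μ₂))
    intro x x' hxx'
    rw [hg]
    nlinarith
  have hg_cont : Continuous g := by rw [hg]; fun_prop
  have hg₁ : g μ₁ < 0 := by
    have := klBernoulli_pos (by linarith) h₁.le h₂ (by linarith) h₁₂.ne'
    simp only [g, klBernoulli_self]
    linarith
  have hg₂ : 0 < g μ₂ := by
    have := klBernoulli_pos h₂.le (by linarith) (by linarith) h₁ h₁₂.ne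
    simpa [g, klBernoulli_self] using this
  obtain ⟨m, hm, hgm⟩ := intermediate_value_Ioo' h₁₂.le hg_cont.continuousOn ⟨hg₁, hg₂⟩
  refine ⟨m, ⟨hm, sub_eq_zero.1 hgm⟩, fun m' ⟨_, hm'⟩ ↦ hg_anti.injective ?_⟩
  simp only [g, hm', sub_self] at hgm ⊢
  exact hgm.symm

lemma klBernoulli_le_max_of_eq {μ₁ μ₂ m z : ℝ} (hm : m ∈ Ioo μ₂ μ₁) (h₂ : 0 < μ₂) (h₁ : μ₁ < 1)
    (heq : klBernoulli m μ₁ = klBernoulli m μ₂) (hz : z ∈ Ioo 0 1) :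
    klBernoulli m μ₁ ≤ max (klBernoulli z μ₁) (klBernoulli z μ₂) := by
  rcases le_total z m with hzm | hmz
  · refine le_max_of_le_left (antitoneOn_klBernoulli_left h₁ ⟨hz.1, ?_⟩ ?_ hzm)
    · linarith [hm.2]
    · exact ⟨h₂.trans hm.1, hm.2.le⟩
  · rw [heq]
    refine le_max_of_le_right (monotoneOn_klBernoulli_left h₂ ?_ ⟨?_, hz.2⟩ hmz)
    · exact ⟨hm.1.le, hm.2.trans h₁⟩
    · linarith [hm.1]

theorem stmt_16 (μ₁ μ₂ : ℝ) (h₂ : 0 < μ₂) (h₁₂ : μ₂ < μ₁) (h₁ : μ₁ < 1) :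
    ∃ mstar : ℝ, (mstar ∈ Set.Ioo μ₂ μ₁ ∧ klBernoulli mstar μ₁ = klBernoulli mstar μ₂) ∧
      (∀ m : ℝ, m ∈ Set.Ioo μ₂ μ₁ → klBernoulli m μ₁ = klBernoulli m μ₂ → m = mstar) ∧
      sInf {v : ℝ | ∃ z ∈ Set.Ioo (0 : ℝ) 1,
          v = max (klBernoulli z μ₁) (klBernoulli z μ₂)} = klBernoulli mstar μ₁ := by
  obtain ⟨m, ⟨hm, heq⟩, huniq⟩ := existsUnique_klBernoulli_eq h₂ h₁₂ h₁
  refine ⟨m, ⟨hm, heq⟩, fun m' hm' heq' ↦ huniq m' ⟨hm', heq'⟩, IsLeast.csInf_eq ⟨?_, ?_⟩⟩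
  · exact ⟨m, ⟨h₂.trans hm.1, hm.2.trans h₁⟩, by rw [heq, max_self]⟩
  · rintro v ⟨z, hz, rfl⟩
    exact klBernoulli_le_max_of_eq hm h₂ h₁ heq hz
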